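/- arXiv:2408.15962 — 2 statements merged into one kernel-verified Lean document; each statement's English description precedes it below -/
import Mathlib

section
/- Let R > 1, let 1/R ≤ r ≤ R, and let w ∈ 𝒜_R. Then ∫₀¹ Γ_R(r·e^{2πiθ}, w) dθ = (log(r/R)/(4π·log R))·log(|w|/R) − (log R)/(2π). -/
open MeasureTheory Filter

noncomputable section

/-- Distance from `x` to the nearest integer. -/
def distZ (x : ℝ) : ℝ := |x - round x|

/-- One-step transfer matrix. -/
def oneStep (v : ℂ → ℂ) (E : ℂ) (z : ℂ) : Matrix (Fin 2) (Fin 2) ℂ :=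
  !![E - v z, -1; 1, 0]

/-- `m`-step transfer matrix. -/
def transfer (v : ℂ → ℂ) (ω : ℝ) (E : ℂ) : ℕ → ℂ → Matrix (Fin 2) (Fin 2) ℂ
  | 0, _ => 1
  | m + 1, z => transfer v ω E m (z + (ω : ℂ)) * oneStep v E z

/-- Operator (`ℓ²`) norm of a 2×2 complex matrix. -/
def opNorm2 (A : Matrix (Fin 2) (Fin 2) ℂ) : ℝ :=
  ‖Matrix.toEuclideanCLM (𝕜 := ℂ) A‖

/-- `u_{m,E}` at a (complexified) phase. -/
def uFun (v : ℂ → ℂ) (ω : ℝ) (E : ℂ) (m : ℕ) (z : ℂ) : ℝ :=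
  (1 / (m : ℝ)) * Real.log (opNorm2 (transfer v ω E m z))

/-- Finite-scale Lyapunov exponent `L_m(ω,E,ε)`. -/
def LyapFS (v : ℂ → ℂ) (ω : ℝ) (E : ℂ) (m : ℕ) (ε : ℝ) : ℝ :=
  ∫ θ in (0:ℝ)..1, uFun v ω E m ((θ : ℂ) + (ε : ℂ) * Complex.I)

/-- Lyapunov exponent `L(ω,E,ε)` (limit of `L_m`, realized as a `limsup`). -/
def Lyap (v : ℂ → ℂ) (ω : ℝ) (E : ℂ) (ε : ℝ) : ℝ :=
  limsup (fun m : ℕ => LyapFS v ω E m ε) atTop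

/-- Avila's acceleration `κ(ω,E)` (right derivative at `ε = 0`, realized as a limsup). -/
def accel (v : ℂ → ℂ) (ω : ℝ) (E : ℂ) : ℝ :=
  limsup (fun ε : ℝ => (Lyap v ω E ε - Lyap v ω E 0) / (2 * Real.pi * ε))
    (nhdsWithin 0 (Set.Ioi 0))

/-- Gauss map. -/
def gaussMap (x : ℝ) : ℝ := Int.fract x⁻¹

/-- Partial quotients of the continued fraction of `ω`; `cfA ω n = aₙ` for `n ≥ 1`. -/
def cfA (ω : ℝ) (n : ℕ) : ℕ := ⌊(gaussMap^[n - 1] ω)⁻¹⌋₊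

/-- Denominators of the continued fraction approximants of `ω`. -/
def cfQ (ω : ℝ) : ℕ → ℕ
  | 0 => 1
  | 1 => cfA ω 1
  | n + 2 => cfA ω (n + 2) * cfQ ω (n + 1) + cfQ ω n

/-- `β(ω) = limsup (log q_{n+1})/q_n`, as an extended real. -/
def betaE (ω : ℝ) : EReal :=
  limsup (fun n : ℕ => ((Real.log (cfQ ω (n + 1)) / (cfQ ω n : ℝ) : ℝ) : EReal)) atTop

/-- Real value of `β(ω)`. -/
def betaR (ω : ℝ) : ℝ := (betaE ω).toReal

/-- `k`-th Fourier coefficient of a function on `𝕋 = ℝ/ℤ`. -/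
def fourierCoeff01 (g : ℝ → ℂ) (k : ℤ) : ℂ :=
  ∫ θ in (0:ℝ)..1, g θ * Complex.exp (-2 * Real.pi * Complex.I * (k : ℂ) * (θ : ℂ))

/-- `k`-th Fourier coefficient of `u_{m,E}`. -/
def uhat (v : ℂ → ℂ) (ω : ℝ) (E : ℂ) (m : ℕ) (k : ℤ) : ℂ :=
  fourierCoeff01 (fun θ : ℝ => ((uFun v ω E m (θ : ℂ) : ℝ) : ℂ)) k

/-- Fejér kernel along `ω`. -/
def fejer (ω : ℝ) (Q : ℕ) (k : ℤ) : ℂ :=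
  ∑ j ∈ Finset.Ioo (-(Q : ℤ)) (Q : ℤ),
    ((((Q : ℝ) - |(j : ℝ)|) / (Q : ℝ) ^ 2 : ℝ) : ℂ) *
      Complex.exp (2 * Real.pi * Complex.I * (k : ℂ) * (j : ℂ) * (ω : ℂ))

/-- Open annulus `𝒜_R`. -/
def annulus (R : ℝ) : Set ℂ := {z : ℂ | 1 / R < ‖z‖ ∧ ‖z‖ < R}

/-- Closed annulus. -/
def closedAnnulus (R : ℝ) : Set ℂ := {z : ℂ | 1 / R ≤ ‖z‖ ∧ ‖z‖ ≤ R}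

/-- Regular part `Γ_R` of the Green's function of the annulus `𝒜_R`. -/
def GammaR (R : ℝ) (z w : ℂ) : ℝ :=
  Real.log (‖z‖ / R) * Real.log (‖w‖ / R) / (4 * Real.pi * Real.log R)
    + (1 / (2 * Real.pi)) * Real.log
      ((∏' k : ℕ, (‖1 - (R : ℂ) ^ (-(4 * ((k : ℤ) + 1))) * z / w‖
          * ‖1 - (R : ℂ) ^ (-(4 * ((k : ℤ) + 1))) * w / z‖))
        / (R * ∏' k : ℕ, (‖1 - (R : ℂ) ^ (-(4 * ((k : ℤ) + 1) - 2)) * w * (starRingEnd ℂ) z‖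
          * ‖1 - (R : ℂ) ^ (-(4 * ((k : ℤ) + 1) - 2)) / ((starRingEnd ℂ) z * w)‖)))

/-- Green's function `G_R` of the annulus `𝒜_R`. -/
def greenR (R : ℝ) (z w : ℂ) : ℝ :=
  (1 / (2 * Real.pi)) * Real.log (‖z - w‖) + GammaR R z w

/-- Second directional derivative of `f : ℂ → ℝ` at `z` in direction `v`. -/
def secondDirDeriv (f : ℂ → ℝ) (v z : ℂ) : ℝ :=
  deriv (deriv (fun t : ℝ => f (z + t • v))) 0

/-- Harmonicity of `f` on a set `S ⊆ ℂ`. -/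
def HarmonicOnSet (f : ℂ → ℝ) (S : Set ℂ) : Prop :=
  ContDiffOn ℝ 2 f S ∧ ∀ z ∈ S, secondDirDeriv f 1 z + secondDirDeriv f Complex.I z = 0

/-!
On the circle `‖z‖ = r` one has `z⁻¹ = conj z / r ^ 2`, so every factor of the two products in
`Γ_R(z, w)` can be written `‖1 - c * z‖` with `‖c‖ * r < 1`. Thus on that circle
`Γ_R(z, w) = A + (2π)⁻¹ log ‖F z‖`, with `A` the right-hand side and `F` a quotient of convergent
products `∏ (1 - c k * z)`, holomorphic and zero-free near the closed disc of radius `r`, with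
`F 0 = 1`. The mean value property of the harmonic function `log ‖F‖` gives the average `A`.
-/
open Complex Metric Real ComplexConjugate

lemma intervalIntegral_comp_exp_eq_circleAverage {E : Type*} [NormedAddCommGroup E]
    [NormedSpace ℝ E] (g : ℂ → E) (r : ℝ) :
    ∫ θ in (0:ℝ)..1, g (r * exp (2 * π * I * θ)) = circleAverage g 0 r := by
  have h := intervalIntegral.integral_comp_mul_left (fun t ↦ g (circleMap 0 r t))
    two_pi_pos.ne' (a := 0) (b := 1)
  rw [mul_zero, mul_one] at h
  rw [circleAverage_def, ← h]
  congr 1 with θ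
  simp only [circleMap, zero_add]
  push_cast
  ring_nf

lemma norm_one_sub_mul_conj (x z : ℂ) : ‖1 - x * conj z‖ = ‖1 - conj x * z‖ := by
  rw [← norm_conj]
  simp

lemma inv_eq_conj_div_sq {z : ℂ} {r : ℝ} (hz : ‖z‖ = r) : z⁻¹ = conj z / (r : ℂ) ^ 2 := by
  rw [inv_def, normSq_eq_norm_sq, hz]
  push_cast
  ring

section prodOneSubMul

def prodOneSubMul (c : ℕ → ℂ) (z : ℂ) : ℂ := ∏' k, (1 - c k * z)

variable {c : ℕ → ℂ}

@[simp] lemma prodOneSubMul_zero : prodOneSubMul c 0 = 1 := by simp [prodOneSubMul]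

lemma differentiableOn_prodOneSubMul (hc : Summable (‖c ·‖)) (ρ : ℝ) :
    DifferentiableOn ℂ (prodOneSubMul c) (ball 0 ρ) := by
  have hprod : HasProdLocallyUniformlyOn (fun k z ↦ 1 + -(c k * z))
      (fun z ↦ ∏' k, (1 + -(c k * z))) (ball 0 ρ) := by
    refine (hc.mul_right ρ).hasProdLocallyUniformlyOn_nat_one_add isOpen_ball
      (.of_forall fun k z hz ↦ ?_) (fun _ ↦ by fun_prop)
    rw [norm_neg, norm_mul]
    exact mul_le_mul_of_nonneg_left (mem_ball_zero_iff.mp hz).le (norm_nonneg _)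
  have hfun : prodOneSubMul c = fun z ↦ ∏' k, (1 + -(c k * z)) := by
    ext z; simp [prodOneSubMul, sub_eq_add_neg]
  rw [hfun]
  exact hprod.differentiableOn (.of_forall fun _ ↦ by
    simpa [Finset.prod_fn] using DifferentiableOn.finsetProd (fun _ _ ↦ by fun_prop)) isOpen_ball

lemma differentiable_prodOneSubMul (hc : Summable (‖c ·‖)) :
    Differentiable ℂ (prodOneSubMul c) := fun z ↦
  (differentiableOn_prodOneSubMul hc (‖z‖ + 1)).differentiableAt
    (isOpen_ball.mem_nhds (by simp))

lemma multipliable_one_sub_mul (hc : Summable (‖c ·‖)) (z : ℂ) :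
    Multipliable fun k ↦ 1 - c k * z := by
  simpa [sub_eq_add_neg] using multipliable_one_add_of_summable (f := fun k ↦ -(c k * z))
    (by simpa using hc.mul_right ‖z‖)

lemma norm_prodOneSubMul (hc : Summable (‖c ·‖)) (z : ℂ) :
    ‖prodOneSubMul c z‖ = ∏' k, ‖1 - c k * z‖ :=
  (multipliable_one_sub_mul hc z).norm_tprod

lemma norm_prodOneSubMul_mul {d : ℕ → ℂ} (hc : Summable (‖c ·‖)) (hd : Summable (‖d ·‖))
    (z : ℂ) :
    ‖prodOneSubMul c z * prodOneSubMul d z‖ = ∏' k, ‖1 - c k * z‖ * ‖1 - d k * z‖ := by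
  rw [norm_mul, norm_prodOneSubMul hc, norm_prodOneSubMul hd,
    (multipliable_one_sub_mul hc z).norm.tprod_mul (multipliable_one_sub_mul hd z).norm]

lemma prodOneSubMul_ne_zero (hc : Summable (‖c ·‖)) {r : ℝ} (hcr : ∀ k, ‖c k‖ * r < 1)
    {z : ℂ} (hz : ‖z‖ ≤ r) : prodOneSubMul c z ≠ 0 := by
  have hsmall : ∀ k, ‖c k * z‖ < 1 := fun k ↦
    (norm_mul_le _ _).trans_lt <| (mul_le_mul_of_nonneg_left hz (norm_nonneg _)).trans_lt (hcr k)
  simpa [prodOneSubMul, sub_eq_add_neg] using tprod_one_add_ne_zero_of_summable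
    (f := fun k ↦ -(c k * z))
    (fun k h ↦ by simp [← sub_eq_add_neg, sub_eq_zero] at h; simpa [← h] using hsmall k)
    (by simpa using hc.mul_right ‖z‖)

end prodOneSubMul

lemma summable_norm_ofReal_zpow_mul {R : ℝ} (hR : 1 < R) {m : ℕ → ℤ} (hm : ∀ k, m k ≤ -k)
    (x : ℂ) : Summable fun k ↦ ‖(R : ℂ) ^ m k * x‖ := by
  have hR0 : 0 < R := one_pos.trans hR
  refine Summable.of_nonneg_of_le (fun _ ↦ norm_nonneg _) (fun k ↦ ?_)
    ((summable_geometric_of_lt_one (inv_nonneg.2 hR0.le) (inv_lt_one_of_one_lt₀ hR)).mul_right ‖x‖)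
  rw [norm_mul, norm_zpow, norm_real, norm_of_nonneg hR0.le, inv_pow, ← zpow_natCast, ← zpow_neg]
  gcongr
  exacts [hR.le, hm k]

lemma norm_ofReal_zpow_mul_mul_lt_one {R r : ℝ} (hR : 1 < R) {m : ℤ} (hm : m ≤ -2) {x : ℂ}
    (hr : 0 ≤ r) (hx : ‖x‖ * r < R ^ 2) : ‖(R : ℂ) ^ m * x‖ * r < 1 := by
  have hR0 : 0 < R := one_pos.trans hR
  have hRm : R ^ m ≤ (R ^ 2)⁻¹ := by
    rw [← zpow_natCast, ← zpow_neg]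
    exact zpow_le_zpow_right₀ hR.le hm
  rw [norm_mul, norm_zpow, norm_real, norm_of_nonneg hR0.le, mul_assoc]
  calc R ^ m * (‖x‖ * r) ≤ (R ^ 2)⁻¹ * (‖x‖ * r) := by gcongr
    _ < (R ^ 2)⁻¹ * R ^ 2 := by gcongr
    _ = 1 := inv_mul_cancel₀ (by positivity)

lemma prodOneSubMul_ofReal_zpow_mul_ne_zero {R r : ℝ} (hR : 1 < R) {m : ℕ → ℤ}
    (hm : ∀ k, m k ≤ -k - 2) {x : ℂ} (hr : 0 ≤ r) (hx : ‖x‖ * r < R ^ 2) {z : ℂ}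
    (hz : ‖z‖ ≤ r) : prodOneSubMul (fun k ↦ (R : ℂ) ^ m k * x) z ≠ 0 :=
  prodOneSubMul_ne_zero (summable_norm_ofReal_zpow_mul hR (fun k ↦ by linarith [hm k]) x)
    (fun k ↦ norm_ofReal_zpow_mul_mul_lt_one hR (by linarith [hm k]) hr hx) hz

section gammaRatio

variable {R r : ℝ} {w z : ℂ}

/-- On the circle `‖z‖ = r`, each factor of the products in `GammaR R z w` is `‖1 - c k * z‖` for
one of these four sequences `c`. -/
def gammaRatio (R r : ℝ) (w z : ℂ) : ℂ :=
  prodOneSubMul (fun k ↦ (R : ℂ) ^ (-(4 * ((k : ℤ) + 1))) * w⁻¹) z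
    * prodOneSubMul (fun k ↦ (R : ℂ) ^ (-(4 * ((k : ℤ) + 1))) * (conj w / (r : ℂ) ^ 2)) z
    / (prodOneSubMul (fun k ↦ (R : ℂ) ^ (-(4 * ((k : ℤ) + 1) - 2)) * conj w) z
      * prodOneSubMul (fun k ↦ (R : ℂ) ^ (-(4 * ((k : ℤ) + 1) - 2)) * (w * (r : ℂ) ^ 2)⁻¹) z)

@[simp] lemma gammaRatio_zero : gammaRatio R r w 0 = 1 := by simp [gammaRatio]

lemma gammaRatio_ne_zero (hR : 1 < R) (hr₁ : 1 / R ≤ r) (hr₂ : r ≤ R) (hw : w ∈ annulus R)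
    (hz : ‖z‖ ≤ r) : gammaRatio R r w z ≠ 0 := by
  obtain ⟨hw₁, hw₂⟩ := hw
  have hR0 : 0 < R := one_pos.trans hR
  have hr0 : 0 < r := (one_div_pos.2 hR0).trans_le hr₁
  have hw0 : 0 < ‖w‖ := (one_div_pos.2 hR0).trans hw₁
  have hRr : 1 ≤ R * r := by rwa [div_le_iff₀' hR0] at hr₁
  have hRw : 1 < R * ‖w‖ := by rwa [div_lt_iff₀' hR0] at hw₁
  have h₁ : ‖w⁻¹‖ * r < R ^ 2 := by
    rw [norm_inv, inv_mul_lt_iff₀ hw0]; nlinarith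
  have h₂ : ‖conj w / (r : ℂ) ^ 2‖ * r < R ^ 2 := by
    rw [norm_div, norm_conj, norm_pow, norm_real, norm_of_nonneg hr0.le, div_mul_eq_mul_div,
      div_lt_iff₀ (by positivity)]
    nlinarith
  have h₃ : ‖conj w‖ * r < R ^ 2 := by
    rw [norm_conj]; nlinarith
  have h₄ : ‖(w * (r : ℂ) ^ 2)⁻¹‖ * r < R ^ 2 := by
    rw [norm_inv, norm_mul, norm_pow, norm_real, norm_of_nonneg hr0.le,
      inv_mul_lt_iff₀ (by positivity)]
    nlinarith [one_lt_mul_of_lt_of_le hRw hRr]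
  have hm₁ : ∀ k : ℕ, -(4 * ((k : ℤ) + 1)) ≤ -k - 2 := fun k ↦ by omega
  have hm₂ : ∀ k : ℕ, -(4 * ((k : ℤ) + 1) - 2) ≤ -k - 2 := fun k ↦ by omega
  exact div_ne_zero
    (mul_ne_zero (prodOneSubMul_ofReal_zpow_mul_ne_zero hR hm₁ hr0.le h₁ hz)
      (prodOneSubMul_ofReal_zpow_mul_ne_zero hR hm₁ hr0.le h₂ hz))
    (mul_ne_zero (prodOneSubMul_ofReal_zpow_mul_ne_zero hR hm₂ hr0.le h₃ hz)
      (prodOneSubMul_ofReal_zpow_mul_ne_zero hR hm₂ hr0.le h₄ hz))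

lemma harmonicAt_log_norm_gammaRatio (hR : 1 < R) (hr₁ : 1 / R ≤ r) (hr₂ : r ≤ R)
    (hw : w ∈ annulus R) (hz : ‖z‖ ≤ r) :
    InnerProductSpace.HarmonicAt (fun z ↦ Real.log ‖gammaRatio R r w z‖) z := by
  have hne := gammaRatio_ne_zero hR hr₁ hr₂ hw hz
  have hP : ∀ {m : ℕ → ℤ}, (∀ k, m k ≤ -k) → ∀ x : ℂ,
      AnalyticAt ℂ (prodOneSubMul fun k ↦ (R : ℂ) ^ m k * x) z := fun hm x ↦
    (differentiable_prodOneSubMul (summable_norm_ofReal_zpow_mul hR hm x)).analyticAt z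
  have hm₁ : ∀ k : ℕ, -(4 * ((k : ℤ) + 1)) ≤ -k := fun k ↦ by omega
  have hm₂ : ∀ k : ℕ, -(4 * ((k : ℤ) + 1) - 2) ≤ -k := fun k ↦ by omega
  exact (((hP hm₁ _).mul (hP hm₁ _)).div ((hP hm₂ _).mul (hP hm₂ _))
    (div_ne_zero_iff.1 hne).2).harmonicAt_log_norm hne

lemma GammaR_eq_of_norm_eq (hR : 1 < R) (hz : ‖z‖ = r) (hne : gammaRatio R r w z ≠ 0) :
    GammaR R z w = Real.log (r / R) * Real.log (‖w‖ / R) / (4 * π * Real.log R)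
      - Real.log R / (2 * π) + (2 * π)⁻¹ * Real.log ‖gammaRatio R r w z‖ := by
  have hR0 : 0 < R := one_pos.trans hR
  have hinv := inv_eq_conj_div_sq hz
  have hm₁ : ∀ k : ℕ, -(4 * ((k : ℤ) + 1)) ≤ -k := fun k ↦ by omega
  have hm₂ : ∀ k : ℕ, -(4 * ((k : ℤ) + 1) - 2) ≤ -k := fun k ↦ by omega
  have hnum : ∏' k : ℕ, (‖1 - (R : ℂ) ^ (-(4 * ((k : ℤ) + 1))) * z / w‖
        * ‖1 - (R : ℂ) ^ (-(4 * ((k : ℤ) + 1))) * w / z‖)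
      = ‖prodOneSubMul (fun k ↦ (R : ℂ) ^ (-(4 * ((k : ℤ) + 1))) * w⁻¹) z
        * prodOneSubMul (fun k ↦ (R : ℂ) ^ (-(4 * ((k : ℤ) + 1))) * (conj w / (r : ℂ) ^ 2)) z‖ :=
      by
    rw [norm_prodOneSubMul_mul (summable_norm_ofReal_zpow_mul hR hm₁ _)
      (summable_norm_ofReal_zpow_mul hR hm₁ _)]
    refine tprod_congr fun k ↦ congrArg₂ (· * ·) (by ring_nf) ?_
    rw [div_eq_mul_inv _ z, hinv, mul_div_assoc', mul_div_right_comm, norm_one_sub_mul_conj]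
    simp [map_zpow₀, mul_div_assoc]
  have hden : ∏' k : ℕ, (‖1 - (R : ℂ) ^ (-(4 * ((k : ℤ) + 1) - 2)) * w * conj z‖
        * ‖1 - (R : ℂ) ^ (-(4 * ((k : ℤ) + 1) - 2)) / (conj z * w)‖)
      = ‖prodOneSubMul (fun k ↦ (R : ℂ) ^ (-(4 * ((k : ℤ) + 1) - 2)) * conj w) z
        * prodOneSubMul (fun k ↦ (R : ℂ) ^ (-(4 * ((k : ℤ) + 1) - 2)) * (w * (r : ℂ) ^ 2)⁻¹) z‖ :=
      by
    rw [norm_prodOneSubMul_mul (summable_norm_ofReal_zpow_mul hR hm₂ _)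
      (summable_norm_ofReal_zpow_mul hR hm₂ _)]
    refine tprod_congr fun k ↦ congrArg₂ (· * ·) ?_ ?_
    · rw [norm_one_sub_mul_conj]
      simp [map_zpow₀]
    · rw [mul_comm (conj z), div_mul_eq_div_div, div_eq_mul_inv _ (conj z), ← map_inv₀, hinv]
      simp only [map_div₀, conj_conj, map_pow, conj_ofReal]
      ring_nf
  have hquot : ∀ a b : ℂ, ‖a‖ / (R * ‖b‖) = ‖a / b‖ / R := fun a b ↦ by
    rw [norm_div]; ring
  rw [GammaR, hz, hnum, hden, hquot, ← gammaRatio,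
    log_div (norm_ne_zero_iff.2 hne) hR0.ne']
  ring

end gammaRatio

/-- circle average of the regular part `Γ_R` of the Green's function. -/
theorem gamma_circle_average
    (R : ℝ) (hR : 1 < R) (r : ℝ) (hr₁ : 1 / R ≤ r) (hr₂ : r ≤ R)
    (w : ℂ) (hw : w ∈ annulus R) :
    (∫ θ in (0:ℝ)..1,
        GammaR R ((r : ℂ) * Complex.exp (2 * Real.pi * Complex.I * (θ : ℂ))) w)
      = (Real.log (r / R) / (4 * Real.pi * Real.log R)) * Real.log (‖w‖ / R)
        - Real.log R / (2 * Real.pi) := by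
  have hr : |r| = r := abs_of_pos ((one_div_pos.2 (one_pos.trans hR)).trans_le hr₁)
  set A := Real.log (r / R) * Real.log (‖w‖ / R) / (4 * π * Real.log R) - Real.log R / (2 * π)
  have hharm : InnerProductSpace.HarmonicOnNhd
      (fun z ↦ A + (2 * π)⁻¹ * Real.log ‖gammaRatio R r w z‖) (closedBall 0 |r|) :=
    fun z hz ↦ (InnerProductSpace.harmonicAt_const A).add
      (harmonicAt_log_norm_gammaRatio hR hr₁ hr₂ hw (by simpa [hr] using hz)).const_smul
  calc _ = circleAverage (GammaR R · w) 0 r := intervalIntegral_comp_exp_eq_circleAverage _ r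
    _ = circleAverage (fun z ↦ A + (2 * π)⁻¹ * Real.log ‖gammaRatio R r w z‖) 0 r :=
      circleAverage_congr_sphere fun z hz ↦ by
        have hzr : ‖z‖ = r := by simpa [hr] using hz
        exact GammaR_eq_of_norm_eq hR hzr (gammaRatio_ne_zero hR hr₁ hr₂ hw hzr.le)
    _ = _ := by
      rw [hharm.circleAverage_eq, gammaRatio_zero]
      simp only [A, norm_one, Real.log_one, mul_zero, add_zero]
      ring

end
end

section
/- Let R₁ > 1 and let h be a real-valued function, continuous on the closed annulus {1/R₁ ≤ |z| ≤ R₁} and harmonic on 𝒜_{R₁}, satisfying the reflection symmetry h(z) = h(1/z̄) for all z in the closed annulus. Then for every k ∈ ℤ \ {0}: | ∫₀¹ h(e^{2πiθ})·e^{−2πikθ} dθ | ≤ 2·M·R₁^{−|k|}, where M = sup_{|z|=R₁} |h(z)|. -/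
open MeasureTheory Filter

noncomputable section

/-!
Fix `k ≠ 0` and let `c(r)` be the `k`-th Fourier coefficient of `h` on the circle `|z| = r`.
Integrating by parts in `θ` expresses `2πik c(r)` through the circle integrals of `∂h · z^{∓k}`,
where `∂h = h_x - i h_y` is holomorphic because `h` is harmonic. By Cauchy's theorem these
integrals do not depend on `r`, so `c(r) = a r^k + b r^{-k}` on the open annulus. The reflection
symmetry gives `c(r) = c(1/r)`, hence `a = b`, and by continuity `c(R₁) = a (R₁^k + R₁^{-k})`.
Since `|c(R₁)| ≤ M`, this yields `|c(1)| = 2|a| ≤ 2M R₁^{-|k|}`.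
-/

open Complex Set Metric InnerProductSpace Topology Real ComplexConjugate Interval

theorem secondDirDeriv_eq_fderiv_fderiv {f : ℂ → ℝ} {z : ℂ} (hf : ContDiffAt ℝ 2 f z) (v : ℂ) :
    secondDirDeriv f v z = fderiv ℝ (fderiv ℝ f) z v v := by
  have hline : ∀ t : ℝ, HasDerivAt (fun t : ℝ => z + t • v) v t := fun t => by
    simpa using ((hasDerivAt_id t).smul_const v).const_add z
  have hline_tendsto : Tendsto (fun t : ℝ => z + t • v) (𝓝 0) (𝓝 z) := by
    simpa using (hline 0).continuousAt.tendsto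
  have hderiv : deriv (fun t : ℝ => f (z + t • v)) =ᶠ[𝓝 0] fun t => fderiv ℝ f (z + t • v) v := by
    filter_upwards [hline_tendsto.eventually (hf.eventually (by simp))] with t ht
    exact ((ht.differentiableAt two_ne_zero).hasFDerivAt.comp_hasDerivAt t (hline t)).deriv
  have hf' : HasFDerivAt (fderiv ℝ f) (fderiv ℝ (fderiv ℝ f) z) (z + (0 : ℝ) • v) := by
    simpa using ((hf.fderiv_right (m := 1) le_rfl).differentiableAt one_ne_zero).hasFDerivAt
  rw [secondDirDeriv, hderiv.deriv_eq]
  exact ((ContinuousLinearMap.apply ℝ ℝ v).hasFDerivAt.comp_hasDerivAt 0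
    (hf'.comp_hasDerivAt 0 (hline 0))).deriv

theorem HarmonicOnSet.harmonicOnNhd {f : ℂ → ℝ} {S : Set ℂ} (hf : HarmonicOnSet f S)
    (hS : IsOpen S) : HarmonicOnNhd f S := fun z hz =>
  ⟨hf.1.contDiffAt (hS.mem_nhds hz), by
    filter_upwards [hS.mem_nhds hz] with y hy
    simp only [laplacian_eq_iteratedFDeriv_complexPlane, iteratedFDeriv_two_apply]
    simpa [← secondDirDeriv_eq_fderiv_fderiv (hf.1.contDiffAt (hS.mem_nhds hy))] using hf.2 y hy⟩

theorem fourierCoeff01_eq_fourierCoeffOn (g : ℝ → ℂ) (k : ℤ) :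
    fourierCoeff01 g k = fourierCoeffOn zero_lt_one g k := by
  rw [fourierCoeffOn_eq_integral, fourierCoeff01]
  simp only [sub_zero, div_one, one_smul, fourier_coe_apply, smul_eq_mul, ofReal_one]
  refine intervalIntegral.integral_congr fun θ _ => ?_
  simp only [Int.cast_neg]
  ring_nf

theorem fourierCoeff01_of_hasDerivAt {u u' : ℝ → ℂ} {k : ℤ} (hk : k ≠ 0)
    (hu : ∀ θ, HasDerivAt u (u' θ) θ) (hu' : IntervalIntegrable u' volume 0 1)
    (hper : u 1 = u 0) :
    fourierCoeff01 u' k = 2 * π * I * k * fourierCoeff01 u k := by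
  have h := fourierCoeffOn_of_hasDerivAt zero_lt_one hk (fun θ _ => hu θ) hu'
  rw [hper, sub_self, mul_zero, zero_sub, ofReal_one, ofReal_zero, sub_zero, one_mul] at h
  have hk' : (2 * π * I * k : ℂ) ≠ 0 := by simp [Real.pi_ne_zero, hk]
  rw [fourierCoeff01_eq_fourierCoeffOn, fourierCoeff01_eq_fourierCoeffOn, h]
  field_simp

theorem fourierCoeff01_re {W : ℝ → ℂ} (hW : Continuous W) (k : ℤ) :
    fourierCoeff01 (fun θ => ((W θ).re : ℂ)) k
      = (fourierCoeff01 W k + conj (fourierCoeff01 W (-k))) / 2 := by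
  simp only [fourierCoeff01, ← intervalIntegral.intervalIntegral_conj]
  rw [← intervalIntegral.integral_add ((by fun_prop : Continuous _).intervalIntegrable _ _)
    ((by fun_prop : Continuous _).intervalIntegrable _ _), ← intervalIntegral.integral_div]
  refine intervalIntegral.integral_congr fun θ _ => ?_
  simp only [map_mul, ← exp_conj, re_eq_add_conj, map_neg, conj_I, conj_ofReal, map_intCast,
    map_ofNat, Int.cast_neg]
  ring_nf

theorem norm_fourierCoeff01_le {g : ℝ → ℂ} {M : ℝ} (hg : ∀ θ, ‖g θ‖ ≤ M) (k : ℤ) :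
    ‖fourierCoeff01 g k‖ ≤ M := by
  unfold fourierCoeff01
  simpa using intervalIntegral.norm_integral_le_of_norm_le_const (a := 0) (b := 1)
    (fun θ _ => by simpa [Complex.norm_exp] using hg θ : ∀ θ ∈ Ι (0:ℝ) 1,
      ‖g θ * cexp (-2 * π * I * k * θ)‖ ≤ M)

/-- Twice the Wirtinger derivative `∂f/∂z`. -/
def complexPartial (f : ℂ → ℝ) (z : ℂ) : ℂ := fderiv ℝ f z 1 - I * fderiv ℝ f z I

theorem fderiv_apply_eq_re_complexPartial_mul (f : ℂ → ℝ) (z w : ℂ) :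
    fderiv ℝ f z w = (complexPartial f z * w).re := by
  have hw : w = w.re • (1 : ℂ) + w.im • I := by simp [real_smul, re_add_im]
  conv_lhs => rw [hw, map_add, map_smul, map_smul]
  simp only [complexPartial, smul_eq_mul, mul_re, sub_re, sub_im, ofReal_re, ofReal_im, I_re,
    I_im, mul_im]
  ring

theorem hasDerivAt_circleMap_two_pi_mul (r θ : ℝ) :
    HasDerivAt (fun t : ℝ => circleMap 0 r (2 * π * t))
      (2 * π * I * circleMap 0 r (2 * π * θ)) θ := by
  have h := (hasDerivAt_circleMap 0 r (2 * π * θ)).scomp θ ((hasDerivAt_id θ).const_mul (2 * π))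
  refine h.congr_deriv ?_
  rw [mul_one, real_smul]
  push_cast
  ring

theorem hasDerivAt_comp_circleMap_two_pi_mul {f : ℂ → ℝ} {r θ : ℝ}
    (hf : DifferentiableAt ℝ f (circleMap 0 r (2 * π * θ))) :
    HasDerivAt (fun t : ℝ => f (circleMap 0 r (2 * π * t)))
      (complexPartial f (circleMap 0 r (2 * π * θ)) * (2 * π * I * circleMap 0 r (2 * π * θ))).re
      θ := by
  rw [← fderiv_apply_eq_re_complexPartial_mul]
  exact hf.hasFDerivAt.comp_hasDerivAt θ (hasDerivAt_circleMap_two_pi_mul r θ)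

theorem circleIntegral_eq_integral_circleMap_two_pi_mul {E : Type*} [NormedAddCommGroup E]
    [NormedSpace ℂ E] (F : ℂ → E) (r : ℝ) :
    ∮ z in C(0, r), F z = ∫ θ in (0 : ℝ)..1,
      (2 * π * I * circleMap 0 r (2 * π * θ)) • F (circleMap 0 r (2 * π * θ)) := by
  have h := intervalIntegral.integral_comp_mul_left (a := 0) (b := 1)
    (fun t => deriv (circleMap 0 r) t • F (circleMap 0 r t)) two_pi_pos.ne'
  rw [mul_zero, mul_one] at h
  rw [circleIntegral, ← smul_inv_smul₀ two_pi_pos.ne' (∫ t in (0 : ℝ)..2 * π, _), ← h,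
    ← intervalIntegral.integral_smul]
  refine intervalIntegral.integral_congr fun θ _ => ?_
  rw [deriv_circleMap, ← coe_smul, smul_smul]
  congr 1
  push_cast
  ring

theorem fourierCoeff01_mul_circleMap_two_pi_mul (g : ℂ → ℂ) {r : ℝ} (hr : r ≠ 0) (n : ℤ) :
    fourierCoeff01
        (fun θ => g (circleMap 0 r (2 * π * θ)) * (2 * π * I * circleMap 0 r (2 * π * θ))) n
      = (r : ℂ) ^ n * ∮ z in C(0, r), g z * z ^ (-n) := by
  rw [circleIntegral_eq_integral_circleMap_two_pi_mul, fourierCoeff01,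
    ← intervalIntegral.integral_const_mul]
  refine intervalIntegral.integral_congr fun θ _ => ?_
  rw [circleMap_zero_zpow]
  have he : cexp ((((-n : ℤ) : ℝ) * (2 * π * θ) : ℝ) * I) = cexp (-2 * π * I * n * θ) := by
    push_cast
    ring_nf
  simp only [circleMap_zero, smul_eq_mul, ofReal_zpow, he]
  have hr' : (r : ℂ) ≠ 0 := ofReal_ne_zero.mpr hr
  rw [zpow_neg]
  field_simp

theorem circleIntegral_eq_of_differentiableOn_annulus {E : Type*} [NormedAddCommGroup E]
    [NormedSpace ℂ E] [CompleteSpace E] {g : ℂ → E} {r₁ r₂ r s : ℝ} (hr₁ : 0 ≤ r₁)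
    (hg : DifferentiableOn ℂ g (norm ⁻¹' Ioo r₁ r₂)) (hr : r ∈ Ioo r₁ r₂) (hs : s ∈ Ioo r₁ r₂) :
    ∮ z in C(0, r), g z = ∮ z in C(0, s), g z := by
  wlog hrs : r ≤ s generalizing r s
  · exact (this hs hr (le_of_not_ge hrs)).symm
  have hsub : closedBall (0 : ℂ) s \ ball 0 r ⊆ norm ⁻¹' Ioo r₁ r₂ := fun z ⟨hzs, hzr⟩ => by
    rw [mem_closedBall_zero_iff] at hzs
    rw [mem_ball_zero_iff, not_lt] at hzr
    exact ⟨hr.1.trans_le hzr, hzs.trans_lt hs.2⟩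
  have hopen : IsOpen (norm ⁻¹' Ioo r₁ r₂ : Set ℂ) := isOpen_Ioo.preimage continuous_norm
  refine (circleIntegral_eq_of_differentiable_on_annulus_off_countable (hr₁.trans_lt hr.1) hrs
    countable_empty (hg.continuousOn.mono hsub) fun z hz => ?_).symm
  exact hg.differentiableAt (hopen.mem_nhds (hsub (sdiff_subset_sdiff ball_subset_closedBall
    ball_subset_closedBall hz.1)))

def circleCoeff (f : ℂ → ℝ) (k : ℤ) (r : ℝ) : ℂ :=
  fourierCoeff01 (fun θ => (f (circleMap 0 r (2 * π * θ)) : ℂ)) k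

theorem circleCoeff_eq_circleIntegral {f : ℂ → ℝ} {r : ℝ} (hr : 0 < r)
    (hf : ∀ z ∈ sphere (0 : ℂ) r, HarmonicAt f z) {k : ℤ} (hk : k ≠ 0) :
    2 * π * I * k * circleCoeff f k r
      = ((r : ℂ) ^ k * (∮ z in C(0, r), complexPartial f z * z ^ (-k))
        + conj ((r : ℂ) ^ (-k) * ∮ z in C(0, r), complexPartial f z * z ^ k)) / 2 := by
  have hmem : ∀ θ : ℝ, circleMap 0 r (2 * π * θ) ∈ sphere (0 : ℂ) r :=
    fun θ => circleMap_mem_sphere 0 hr.le _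
  have hW : Continuous fun θ : ℝ => complexPartial f (circleMap 0 r (2 * π * θ))
      * (2 * π * I * circleMap 0 r (2 * π * θ)) := by
    refine Continuous.mul (continuous_iff_continuousAt.mpr fun θ => ?_) (by fun_prop)
    exact (HarmonicAt.differentiableAt_complex_partial (hf _ (hmem θ))).continuousAt.comp
      (f := fun θ : ℝ => circleMap 0 r (2 * π * θ)) (by fun_prop)
  have hper : circleMap 0 r (2 * π * 1) = circleMap 0 r (2 * π * 0) := by
    simpa using (periodic_circleMap 0 r).eq
  rw [circleCoeff, ← fourierCoeff01_of_hasDerivAt hk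
      (fun θ => (hasDerivAt_comp_circleMap_two_pi_mul
        ((hf _ (hmem θ)).1.differentiableAt two_ne_zero)).ofReal_comp)
      ((continuous_ofReal.comp (continuous_re.comp hW)).intervalIntegrable 0 1) (by rw [hper]),
    fourierCoeff01_re hW, fourierCoeff01_mul_circleMap_two_pi_mul _ hr.ne',
    fourierCoeff01_mul_circleMap_two_pi_mul _ hr.ne', neg_neg]

theorem exists_circleCoeff_eq_of_harmonicOnNhd {f : ℂ → ℝ} {r₁ r₂ : ℝ} (hr₁ : 0 ≤ r₁)
    (hf : HarmonicOnNhd f (norm ⁻¹' Ioo r₁ r₂)) {k : ℤ} (hk : k ≠ 0) :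
    ∃ a b : ℂ, ∀ r ∈ Ioo r₁ r₂, circleCoeff f k r = a * (r : ℂ) ^ k + b * (r : ℂ) ^ (-k) := by
  rcases (Ioo r₁ r₂).eq_empty_or_nonempty with hempty | ⟨ρ, hρ⟩
  · exact ⟨0, 0, by simp [hempty]⟩
  have hg : ∀ n : ℤ, DifferentiableOn ℂ (fun z => complexPartial f z * z ^ n)
      (norm ⁻¹' Ioo r₁ r₂) := fun n z hz =>
    ((HarmonicAt.differentiableAt_complex_partial (hf z hz)).mul (differentiableAt_zpow.mpr
      (Or.inl (norm_pos_iff.mp (hr₁.trans_lt hz.1))))).differentiableWithinAt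
  set A : ℤ → ℂ := fun n => ∮ z in C(0, ρ), complexPartial f z * z ^ n
  have hk' : (2 * π * I * k : ℂ) ≠ 0 := by simp [Real.pi_ne_zero, hk]
  refine ⟨A (-k) / (2 * (2 * π * I * k)), conj (A k) / (2 * (2 * π * I * k)), fun r hr => ?_⟩
  have key := circleCoeff_eq_circleIntegral (hr₁.trans_lt hr.1)
    (fun z hz => hf z (by rw [mem_preimage, mem_sphere_zero_iff_norm.mp hz]; exact hr)) hk
  rw [circleIntegral_eq_of_differentiableOn_annulus hr₁ (hg _) hr hρ,
    circleIntegral_eq_of_differentiableOn_annulus hr₁ (hg _) hr hρ, map_mul, map_zpow₀,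
    conj_ofReal] at key
  field_simp
  linear_combination 2 * key

theorem circleCoeff_one (f : ℂ → ℝ) (k : ℤ) :
    circleCoeff f k 1 = ∫ θ in (0 : ℝ)..1,
      (f (cexp (2 * π * I * θ)) : ℂ) * cexp (-2 * π * I * k * θ) := by
  refine intervalIntegral.integral_congr fun θ _ => ?_
  simp only [circleMap_zero, ofReal_one, one_mul, ofReal_mul, ofReal_ofNat]
  ring_nf

theorem circleCoeff_inv {f : ℂ → ℝ} {r : ℝ} (hf : ∀ z ∈ sphere (0 : ℂ) |r|, f z = f (conj z)⁻¹)
    (k : ℤ) : circleCoeff f k r⁻¹ = circleCoeff f k r := by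
  refine intervalIntegral.integral_congr fun θ _ => ?_
  dsimp only
  rw [hf _ (circleMap_mem_sphere' 0 r _), conj_circleMap_zero, circleMap_zero_inv, neg_neg]

theorem continuousOn_circleCoeff {f : ℂ → ℝ} {r₁ r₂ : ℝ} (hr₁ : 0 ≤ r₁)
    (hf : ContinuousOn f (norm ⁻¹' Icc r₁ r₂)) (k : ℤ) :
    ContinuousOn (circleCoeff f k) (Icc r₁ r₂) := by
  rw [continuousOn_iff_continuous_domRestrict]
  refine intervalIntegral.continuous_parametric_intervalIntegral_of_continuous' ?_ 0 1
  have hmem : ∀ p : Icc r₁ r₂ × ℝ, circleMap 0 p.1 (2 * π * p.2) ∈ norm ⁻¹' Icc r₁ r₂ :=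
    fun p => by
      rw [mem_preimage, norm_circleMap_zero, abs_of_nonneg (hr₁.trans p.1.2.1)]
      exact p.1.2
  exact (continuous_ofReal.comp (hf.comp_continuous (by fun_prop) hmem)).mul (by fun_prop)

theorem norm_circleCoeff_le {f : ℂ → ℝ} {r M : ℝ} (hr : 0 ≤ r)
    (hM : ∀ z ∈ sphere (0 : ℂ) r, |f z| ≤ M) (k : ℤ) : ‖circleCoeff f k r‖ ≤ M :=
  norm_fourierCoeff01_le (fun θ => by
    simpa only [norm_real, Real.norm_eq_abs] using hM _ (circleMap_mem_sphere 0 hr _)) k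

theorem abs_le_sSup_abs_image_sphere {f : ℂ → ℝ} {R : ℝ} (hf : ContinuousOn f {z | ‖z‖ = R})
    {z : ℂ} (hz : ‖z‖ = R) : |f z| ≤ sSup ((fun z => |f z|) '' {z : ℂ | ‖z‖ = R}) := by
  have hsphere : {z : ℂ | ‖z‖ = R} = sphere 0 R := by ext; simp
  refine le_csSup (IsCompact.bddAbove ?_) ⟨z, hz, rfl⟩
  rw [hsphere] at hf ⊢
  exact (isCompact_sphere 0 R).image_of_continuousOn hf.abs

theorem eq_of_mul_zpow_add_mul_zpow_neg_eq {a b : ℂ} {r : ℝ} (hr : 0 < r) (hr1 : r ≠ 1) {k : ℤ}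
    (hk : k ≠ 0) (h : a * (r : ℂ) ^ k + b * (r : ℂ) ^ (-k) = a * (r : ℂ) ^ (-k) + b * (r : ℂ) ^ k) :
    a = b := by
  have hne : (r : ℂ) ^ k - (r : ℂ) ^ (-k) ≠ 0 := by
    rw [sub_ne_zero, ← ofReal_zpow, ← ofReal_zpow, Ne, ofReal_inj]
    exact fun h => hk (by linarith [zpow_right_injective₀ hr hr1 h])
  exact sub_eq_zero.mp ((mul_eq_zero.mp (by linear_combination h :
    (a - b) * ((r : ℂ) ^ k - (r : ℂ) ^ (-k)) = 0)).resolve_right hne)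

theorem zpow_natAbs_le_zpow_add_zpow_neg {R : ℝ} (hR : 0 < R) (k : ℤ) :
    R ^ (k.natAbs : ℤ) ≤ R ^ k + R ^ (-k) := by
  rcases Int.natAbs_eq k with hk | hk
  · rw [← hk]; linarith [zpow_pos hR (-k)]
  · rw [← neg_eq_iff_eq_neg.mpr hk]; linarith [zpow_pos hR k]

theorem exists_circleCoeff_eq_of_reflection_symmetric {R : ℝ} (hR : 1 < R) {f : ℂ → ℝ}
    (hcont : ContinuousOn f (closedAnnulus R)) (hharm : HarmonicOnSet f (annulus R))
    (hsym : ∀ z ∈ closedAnnulus R, f z = f (conj z)⁻¹) {k : ℤ} (hk : k ≠ 0) :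
    ∃ a : ℂ, ∀ r ∈ Icc (1 / R) R, circleCoeff f k r = a * ((r : ℂ) ^ k + (r : ℂ) ^ (-k)) := by
  have hR₀ : 0 < R := by linarith
  have h1R : 1 / R < 1 := (div_lt_one hR₀).mpr hR
  obtain ⟨a, b, hab⟩ := exists_circleCoeff_eq_of_harmonicOnNhd (by positivity)
    (hharm.harmonicOnNhd (isOpen_Ioo.preimage continuous_norm)) hk
  obtain ⟨ρ, hρ1, hρR⟩ := exists_between hR
  have hρ₀ : 0 < ρ := by linarith
  have hρ : ρ ∈ Ioo (1 / R) R := ⟨h1R.trans hρ1, hρR⟩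
  have hρinv : ρ⁻¹ ∈ Ioo (1 / R) R :=
    ⟨by rw [one_div]; exact inv_strictAnti₀ hρ₀ hρR, (inv_lt_one_of_one_lt₀ hρ1).trans hR⟩
  have hba : a = b := by
    have hsymρ := circleCoeff_inv (f := f) (r := ρ) (fun z hz => hsym z ?_) k
    · rw [hab _ hρinv, hab _ hρ, ofReal_inv, inv_zpow', inv_zpow', neg_neg] at hsymρ
      exact eq_of_mul_zpow_add_mul_zpow_neg_eq hρ₀ hρ1.ne' hk (by linear_combination -hsymρ)
    · rw [abs_of_pos hρ₀, mem_sphere_zero_iff_norm] at hz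
      exact ⟨hz ▸ hρ.1.le, hz ▸ hρ.2.le⟩
  subst hba
  refine ⟨a, EqOn.of_subset_closure (fun r hr => by rw [hab r hr]; ring)
    (continuousOn_circleCoeff (by positivity) hcont k) ?_ Ioo_subset_Icc_self
    (closure_Ioo (h1R.trans hR).ne).ge⟩
  intro r hr
  have hr0 : (r : ℂ) ≠ 0 := ofReal_ne_zero.mpr (lt_of_lt_of_le (by positivity) hr.1).ne'
  fun_prop (disch := exact .inl hr0)

/-- Fourier decay of a harmonic function on the annulus with
reflection symmetry, in terms of its sup on the outer circle. -/
theorem fourier_decay_of_harmonic_part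
    (R₁ : ℝ) (hR : 1 < R₁) (h : ℂ → ℝ)
    (hcont : ContinuousOn h (closedAnnulus R₁))
    (hharm : HarmonicOnSet h (annulus R₁))
    (hsym : ∀ z ∈ closedAnnulus R₁, h z = h ((starRingEnd ℂ) z)⁻¹)
    (k : ℤ) (hk : k ≠ 0) :
    ‖∫ θ in (0:ℝ)..1,
        ((h (Complex.exp (2 * Real.pi * Complex.I * (θ : ℂ))) : ℝ) : ℂ)
          * Complex.exp (-2 * Real.pi * Complex.I * (k : ℂ) * (θ : ℂ))‖
      ≤ 2 * sSup ((fun z : ℂ => |h z|) '' {z : ℂ | ‖z‖ = R₁})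
          * R₁ ^ (-(k.natAbs : ℤ)) := by
  set M := sSup ((fun z : ℂ => |h z|) '' {z : ℂ | ‖z‖ = R₁})
  have hR₀ : 0 < R₁ := by linarith
  have h1R : 1 / R₁ ≤ 1 := (div_le_one hR₀).mpr hR.le
  have hsphere : {z : ℂ | ‖z‖ = R₁} ⊆ closedAnnulus R₁ := fun z hz =>
    ⟨h1R.trans (hR.le.trans hz.ge), hz.le⟩
  obtain ⟨a, ha⟩ := exists_circleCoeff_eq_of_reflection_symmetric hR hcont hharm hsym hk
  have hM : ‖a‖ * (R₁ ^ k + R₁ ^ (-k)) ≤ M := by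
    have := norm_circleCoeff_le hR₀.le (fun z hz => abs_le_sSup_abs_image_sphere
      (hcont.mono hsphere) (mem_sphere_zero_iff_norm.mp hz)) k
    rwa [ha R₁ ⟨h1R.trans hR.le, le_rfl⟩, norm_mul, ← ofReal_zpow, ← ofReal_zpow, ← ofReal_add,
      norm_real, Real.norm_of_nonneg (by positivity)] at this
  have hpow := zpow_natAbs_le_zpow_add_zpow_neg hR₀ k
  rw [← circleCoeff_one, ha 1 ⟨h1R, hR.le⟩, ofReal_one, one_zpow, one_zpow, norm_mul,
    zpow_neg, ← div_eq_mul_inv, le_div_iff₀ (by positivity),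
    show ‖(1 : ℂ) + 1‖ = 2 by norm_num]
  nlinarith [norm_nonneg a]

end
end
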